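/- Let F be a division ring, G a division subring of F, and (f_i)_{i∈ℕ} a sequence in F with f_0 = 1 satisfying axioms (T4), (T5), (T6). Then for every k ≥ 0 and every left G-subspace H of F with dim_G H = k + 1 there exists a ∈ F with L_k·a = H. -/

import Mathlib

/-- `L_k`: the left `G`-subspace of `F` spanned by `f_0, …, f_k`. -/
def Lset {F : Type*} [DivisionRing F] (G : Subring F) (f : ℕ → F) (k : ℕ) : Set F :=
  {x | ∃ c : ℕ → F, (∀ i, c i ∈ G) ∧ x = ∑ i ∈ Finset.range (k + 1), c i * f i}

/-- `S_k = {a ∈ F : L_k · a ⊆ L_k}`. -/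
def Sset {F : Type*} [DivisionRing F] (G : Subring F) (f : ℕ → F) (k : ℕ) : Set F :=
  {a | ∀ x ∈ Lset G f k, x * a ∈ Lset G f k}

/-- `D_0 = F`, and `D_k = {a ∈ F : L_{k-1} · a ⊆ L_k}` for `k ≥ 1`. -/
def Dset {F : Type*} [DivisionRing F] (G : Subring F) (f : ℕ → F) : ℕ → Set F
  | 0 => Set.univ
  | k + 1 => {a | ∀ x ∈ Lset G f k, x * a ∈ Lset G f (k + 1)}

/-- The left `G`-span of a finite family of elements of `F`. -/
def GSpan {F : Type*} [DivisionRing F] (G : Subring F) {m : ℕ} (h : Fin m → F) : Set F :=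
  {x | ∃ c : Fin m → F, (∀ i, c i ∈ G) ∧ x = ∑ i, c i * h i}

/-!
The proof is an induction on `k` proving two statements together:
(A) every `(k+1)`-dimensional subspace is `L_k · a` with `a ≠ 0`, and
(B) for `x, y ∉ L_k` there is `t ∈ S_k` with `x - y t ∈ L_k`.
Both hold at `k = 0` by (T4), since `L_0 = S_0 = G`. Applying (A) to `f_1, …, f_{k+1}` gives
`v ∈ D_{k+1} \ S_k`, and then (B) gives, for every `e ∉ L_k`, some `w ≠ 0` in `D_{k+1}` with
`e w ∈ L_{k+1}`: one of `w = 1`, `w = v` or `w = v - t` works.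
For (A) at `k + 1`, write `h_0, …, h_k` as `L_k · v` and take `w` for `e = h_{k+1} v⁻¹`.
Then `L_{k+1} · w⁻¹ v` contains every `h_i`, so it is their span because the dimensions agree.
For (B) at `k + 1`, (T6) writes `t = s + b τ` and `w = s₁ + b τ₁` with `s, τ, s₁, τ₁ ∈ S_{k+1}`.
Here `τ₁ ≠ 0`, and `t - w τ₁⁻¹ τ = s - s₁ τ₁⁻¹ τ` is the required element of `S_{k+1}`.
-/

open Module Submodule Set

section RightMultiplication

variable {K F : Type*} [DivisionRing F]

lemma finrank_map_mulRight [Ring K] [Module K F] [IsScalarTower K F F] {a : F} (ha : a ≠ 0)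
    (W : Submodule K F) : finrank K (W.map (LinearMap.mulRight K a)) = finrank K W :=
  (LinearEquiv.finrank_eq (W.equivMapOfInjective _ fun _ _ h => mul_right_cancel₀ ha h)).symm

variable [DivisionRing K] [Module K F] [IsScalarTower K F F]

lemma map_mulRight_eq_of_le {a : F} (ha : a ≠ 0) {W : Submodule K F} [FiniteDimensional K W]
    (hW : W.map (LinearMap.mulRight K a) ≤ W) : W.map (LinearMap.mulRight K a) = W :=
  eq_of_le_of_finrank_eq hW (finrank_map_mulRight ha W)

lemma map_mulRight_inv_le {a : F} (ha : a ≠ 0) {W : Submodule K F} [FiniteDimensional K W]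
    (hW : W.map (LinearMap.mulRight K a) ≤ W) : W.map (LinearMap.mulRight K a⁻¹) ≤ W := by
  rintro _ ⟨x, hx, rfl⟩
  rw [← map_mulRight_eq_of_le ha hW] at hx
  obtain ⟨y, hy, rfl⟩ := hx
  simpa [mul_assoc, ha] using hy

end RightMultiplication

section Model

variable {F : Type*} [DivisionRing F] {G : Subring F} {f : ℕ → F}

variable (G) in
abbrev Subring.divisionRingOfInvMem (hG : ∀ x ∈ G, x⁻¹ ∈ G) : DivisionRing G :=
  { (inferInstance : Ring G) with
    inv := fun a => ⟨(a : F)⁻¹, hG _ a.2⟩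
    mul_inv_cancel := fun a ha => Subtype.ext (mul_inv_cancel₀ fun h => ha (Subtype.ext h))
    inv_zero := Subtype.ext inv_zero
    nnqsmul := _
    qsmul := _ }

variable (G f) in
def Lsub (k : ℕ) : Submodule G F :=
  span G (range fun i : Fin (k + 1) => f i)

instance (k : ℕ) : Module.Finite G (Lsub G f k) :=
  Module.Finite.span_of_finite G (finite_range _)

lemma GSpan_eq_span {m : ℕ} (v : Fin m → F) : GSpan G v = span G (range v) := by
  ext x
  simp only [GSpan, mem_ofPred_eq, SetLike.mem_coe, mem_span_range_iff_exists_fun,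
    Subring.smul_def]
  constructor
  · rintro ⟨c, hc, rfl⟩
    exact ⟨fun i => ⟨c i, hc i⟩, rfl⟩
  · rintro ⟨c, rfl⟩
    exact ⟨fun i => c i, fun i => (c i).2, rfl⟩

lemma Lset_eq_GSpan (k : ℕ) : Lset G f k = GSpan G fun i : Fin (k + 1) => f i := by
  ext x
  constructor
  · rintro ⟨c, hc, rfl⟩
    exact ⟨fun i => c i, fun i => hc i, (Fin.sum_univ_eq_sum_range (fun i => c i * f i) _).symm⟩
  · rintro ⟨c, hc, rfl⟩
    refine ⟨fun i => if h : i < k + 1 then c ⟨i, h⟩ else 0, fun i => ?_, ?_⟩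
    · dsimp only
      split_ifs
      exacts [hc _, G.zero_mem]
    · rw [Finset.sum_range]
      simp [Fin.is_le]

lemma coe_Lsub (k : ℕ) : (Lsub G f k : Set F) = Lset G f k := by
  rw [Lset_eq_GSpan, GSpan_eq_span, Lsub]

lemma mem_Sset_iff {k : ℕ} {a : F} : a ∈ Sset G f k ↔ ∀ x ∈ Lsub G f k, x * a ∈ Lsub G f k := by
  simp [Sset, ← coe_Lsub]

lemma mem_Dset_succ_iff {k : ℕ} {a : F} :
    a ∈ Dset G f (k + 1) ↔ ∀ x ∈ Lsub G f k, x * a ∈ Lsub G f (k + 1) := by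
  simp [Dset, ← coe_Lsub]

lemma Lsub_le_succ (k : ℕ) : Lsub G f k ≤ Lsub G f (k + 1) :=
  span_mono (range_subset_iff.2 fun i => ⟨i.castSucc, rfl⟩)

lemma mem_Lsub_zero_iff (hf0 : f 0 = 1) {x : F} : x ∈ Lsub G f 0 ↔ x ∈ G := by
  simp [Lsub, mem_span_singleton, Subring.smul_def, hf0]

lemma zero_mem_Sset (k : ℕ) : (0 : F) ∈ Sset G f k :=
  mem_Sset_iff.2 fun x _ => by simp

lemma mul_mem_Sset {k : ℕ} {s t : F} (hs : s ∈ Sset G f k) (ht : t ∈ Sset G f k) :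
    s * t ∈ Sset G f k :=
  fun x hx => mul_assoc x s t ▸ ht _ (hs x hx)

lemma sub_mem_Sset {k : ℕ} {s t : F} (hs : s ∈ Sset G f k) (ht : t ∈ Sset G f k) :
    s - t ∈ Sset G f k := by
  rw [mem_Sset_iff] at *
  exact fun x hx => mul_sub x s t ▸ sub_mem (hs x hx) (ht x hx)

lemma inv_mem_Sset (hG : ∀ x ∈ G, x⁻¹ ∈ G) {k : ℕ} {s : F} (hs : s ∈ Sset G f k) :
    s⁻¹ ∈ Sset G f k := by
  let := G.divisionRingOfInvMem hG
  rcases eq_or_ne s 0 with rfl | hs0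
  · simpa using hs
  have hle : (Lsub G f k).map (LinearMap.mulRight G s) ≤ Lsub G f k := by
    rintro _ ⟨x, hx, rfl⟩
    exact mem_Sset_iff.1 hs x hx
  exact mem_Sset_iff.2 fun x hx => map_mulRight_inv_le hs0 hle ⟨x, hx, rfl⟩

lemma Sset_subset_Dset_succ (k : ℕ) : Sset G f k ⊆ Dset G f (k + 1) := fun _ hs =>
  mem_Dset_succ_iff.2 fun x hx => Lsub_le_succ k (mem_Sset_iff.1 hs x hx)

lemma one_mem_Dset_succ (k : ℕ) : (1 : F) ∈ Dset G f (k + 1) :=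
  Sset_subset_Dset_succ k fun x hx => by simpa using hx

lemma sub_mem_Dset_succ {k : ℕ} {a b : F} (ha : a ∈ Dset G f (k + 1))
    (hb : b ∈ Dset G f (k + 1)) : a - b ∈ Dset G f (k + 1) := by
  rw [mem_Dset_succ_iff] at *
  exact fun x hx => mul_sub x a b ▸ sub_mem (ha x hx) (hb x hx)

lemma linearIndependent_of_sum_range_eq_zero
    (hf : ∀ c : ℕ → F, (∀ i, c i ∈ G) →
      ∀ m : ℕ, ∑ i ∈ Finset.range m, c i * f i = 0 → ∀ i < m, c i = 0) :
    LinearIndependent G f := by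
  classical
  rw [linearIndependent_iff']
  intro s c hc i hi
  obtain ⟨m, hm⟩ : ∃ m, s ⊆ Finset.range m := ⟨s.sup id + 1, fun j hj =>
    Finset.mem_range.2 (Nat.lt_succ_of_le (s.le_sup (f := id) hj))⟩
  have hsum : ∑ j ∈ Finset.range m, (if j ∈ s then (c j : F) else 0) * f j = 0 := by
    rw [← Finset.sum_subset hm (by simp_all)]
    simpa [Subring.smul_def] using hc
  have := hf _ (fun j => by split_ifs <;> simp) m hsum i (Finset.mem_range.1 (hm hi))
  exact Subtype.ext (by simpa [hi] using this)

lemma finrank_Lsub (hG : ∀ x ∈ G, x⁻¹ ∈ G) (hli : LinearIndependent G f) (k : ℕ) :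
    finrank G (Lsub G f k) = k + 1 := by
  let := G.divisionRingOfInvMem hG
  exact (finrank_span_eq_card (hli.comp _ Fin.val_injective)).trans (Fintype.card_fin _)

lemma succ_notMem_Lsub (hli : LinearIndependent G f) (k : ℕ) : f (k + 1) ∉ Lsub G f k := by
  have := hli.notMem_span_image (s := Iio (k + 1)) (x := k + 1) (by simp)
  rwa [← Fin.range_val, ← range_comp] at this

variable (G f)

def RightTranslatesOnto (k : ℕ) : Prop :=
  ∀ h : Fin (k + 1) → F, LinearIndependent G h →
    ∃ a ≠ 0, (Lsub G f k).map (LinearMap.mulRight G a) = span G (range h)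

def SsetTransitive (k : ℕ) : Prop :=
  ∀ x ∉ Lsub G f k, ∀ y ∉ Lsub G f k, ∃ t ∈ Sset G f k, x - y * t ∈ Lsub G f k

variable {G f}

lemma rightTranslatesOnto_zero (hf0 : f 0 = 1) : RightTranslatesOnto G f 0 := by
  intro h hli
  refine ⟨h 0, hli.ne_zero 0, ?_⟩
  rw [Lsub, map_span, ← range_comp]
  congr 1
  ext x
  simp [hf0, Fin.fin_one_eq_zero]

lemma ssetTransitive_zero (hG : ∀ x ∈ G, x⁻¹ ∈ G) (hf0 : f 0 = 1)
    (hf1 : ∀ x : F, ∃ a ∈ G, ∃ b ∈ G, x = a + f 1 * b) : SsetTransitive G f 0 := by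
  simp only [SsetTransitive, mem_Lsub_zero_iff hf0]
  intro x _ y hy
  obtain ⟨a, ha, b, hb, rfl⟩ := hf1 x
  obtain ⟨a', ha', b', hb', rfl⟩ := hf1 y
  have hb'0 : b' ≠ 0 := by
    rintro rfl
    exact hy (by simpa using ha')
  have ht : b'⁻¹ * b ∈ G := G.mul_mem (hG _ hb') hb
  refine ⟨b'⁻¹ * b, mem_Sset_iff.2 fun z hz => ?_, ?_⟩
  · rw [mem_Lsub_zero_iff hf0] at hz ⊢
    exact G.mul_mem hz ht
  · have : a + f 1 * b - (a' + f 1 * b') * (b'⁻¹ * b) = a - a' * (b'⁻¹ * b) := by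
      rw [add_mul, mul_assoc, mul_inv_cancel_left₀ hb'0]
      abel
    rw [this]
    exact G.sub_mem ha (G.mul_mem ha' ht)

lemma exists_mem_Dset_notMem_Sset (hli : LinearIndependent G f) {n : ℕ}
    (hA : RightTranslatesOnto G f n) : ∃ v ∈ Dset G f (n + 1), v ∉ Sset G f n := by
  obtain ⟨v, -, hv⟩ := hA (fun i => f (i + 1)) (hli.comp _ fun i j h => Fin.ext (by simpa using h))
  have hspan : span G (range fun i : Fin (n + 1) => f (i + 1)) ≤ Lsub G f (n + 1) :=
    span_mono (range_subset_iff.2 fun i => ⟨i.succ, rfl⟩)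
  refine ⟨v, mem_Dset_succ_iff.2 fun x hx => hspan (hv ▸ ⟨x, hx, rfl⟩), fun hvS => ?_⟩
  obtain ⟨x, hx, hxv⟩ : f (n + 1) ∈ (Lsub G f n).map (LinearMap.mulRight G v) :=
    hv ▸ subset_span ⟨Fin.last n, rfl⟩
  exact succ_notMem_Lsub hli n (hxv ▸ mem_Sset_iff.1 hvS x hx)

lemma exists_mul_mem_Lsub_succ (hli : LinearIndependent G f) {n : ℕ}
    (hA : RightTranslatesOnto G f n) (hK : SsetTransitive G f n) {e : F} (he : e ∉ Lsub G f n) :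
    ∃ w ≠ 0, w ∈ Dset G f (n + 1) ∧ e * w ∈ Lsub G f (n + 1) := by
  obtain ⟨v, hvD, hvS⟩ := exists_mem_Dset_notMem_Sset hli hA
  have hv0 : v ≠ 0 := fun h => hvS (h ▸ zero_mem_Sset n)
  by_cases he1 : e ∈ Lsub G f (n + 1)
  · exact ⟨1, one_ne_zero, one_mem_Dset_succ n, by simpa using he1⟩
  by_cases hev : e * v ∈ Lsub G f (n + 1)
  · exact ⟨v, hv0, hvD, hev⟩
  obtain ⟨t, htS, het⟩ := hK (e * v) (fun h => hev (Lsub_le_succ n h)) e he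
  refine ⟨v - t, sub_ne_zero.2 fun h => hvS (h ▸ htS),
    sub_mem_Dset_succ hvD (Sset_subset_Dset_succ n htS), ?_⟩
  rw [mul_sub]
  exact Lsub_le_succ n het

lemma rightTranslatesOnto_succ (hG : ∀ x ∈ G, x⁻¹ ∈ G) (hli : LinearIndependent G f) {n : ℕ}
    (hA : RightTranslatesOnto G f n) (hK : SsetTransitive G f n) :
    RightTranslatesOnto G f (n + 1) := by
  let := G.divisionRingOfInvMem hG
  intro h hh
  obtain ⟨hinit, hlast⟩ := linearIndependent_finSnoc.1 (by rwa [Fin.snoc_init_self])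
  obtain ⟨v, hv0, hv⟩ := hA (Fin.init h) hinit
  set e := h (Fin.last (n + 1)) * v⁻¹
  have he : e ∉ Lsub G f n := fun hmem => hlast (hv ▸ ⟨e, hmem, by simp [e, hv0]⟩)
  obtain ⟨w, hw0, hwD, hew⟩ := exists_mul_mem_Lsub_succ hli hA hK he
  have ha0 : w⁻¹ * v ≠ 0 := mul_ne_zero (inv_ne_zero hw0) hv0
  refine ⟨w⁻¹ * v, ha0, (eq_of_le_of_finrank_eq (span_le.2 ?_) ?_).symm⟩
  · rintro _ ⟨i, rfl⟩
    induction i using Fin.lastCases with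
    | last => exact ⟨e * w, hew, by simp [e, mul_assoc, hw0, hv0]⟩
    | cast j =>
      obtain ⟨x, hx, hxv⟩ : h j.castSucc ∈ (Lsub G f n).map (LinearMap.mulRight G v) :=
        hv ▸ subset_span ⟨j, rfl⟩
      exact ⟨x * w, mem_Dset_succ_iff.1 hwD x hx, by simpa [mul_assoc, hw0] using hxv⟩
  · rw [finrank_map_mulRight ha0, finrank_Lsub hG hli, finrank_span_eq_card hh,
      Fintype.card_fin]

lemma ssetTransitive_succ (hG : ∀ x ∈ G, x⁻¹ ∈ G) (hli : LinearIndependent G f) {n : ℕ}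
    (hA : RightTranslatesOnto G f n) (hK : SsetTransitive G f n)
    (hb : ∃ b : F, ∀ x ∈ Dset G f (n + 1),
      ∃ s ∈ Sset G f (n + 1), ∃ t ∈ Sset G f (n + 1), x = s + b * t) :
    SsetTransitive G f (n + 1) := by
  obtain ⟨b, hb⟩ := hb
  intro x hx y hy
  have hyn : y ∉ Lsub G f n := fun h => hy (Lsub_le_succ n h)
  obtain ⟨t, htS, ht⟩ := hK x (fun h => hx (Lsub_le_succ n h)) y hyn
  obtain ⟨s, hsS, τ, hτS, rfl⟩ := hb t (Sset_subset_Dset_succ n htS)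
  obtain ⟨w, hw0, hwD, hyw⟩ := exists_mul_mem_Lsub_succ hli hA hK hyn
  obtain ⟨s₁, hs₁S, τ₁, hτ₁S, rfl⟩ := hb w hwD
  have hτ₁0 : τ₁ ≠ 0 := by
    rintro rfl
    rw [mul_zero, add_zero] at hw0 hyw
    apply hy
    simpa [mul_assoc, hw0] using mem_Sset_iff.1 (inv_mem_Sset hG hs₁S) _ hyw
  have huS : τ₁⁻¹ * τ ∈ Sset G f (n + 1) := mul_mem_Sset (inv_mem_Sset hG hτ₁S) hτS
  refine ⟨s - s₁ * (τ₁⁻¹ * τ), sub_mem_Sset hsS (mul_mem_Sset hs₁S huS), ?_⟩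
  have : x - y * (s - s₁ * (τ₁⁻¹ * τ)) =
      (x - y * (s + b * τ)) + y * (s₁ + b * τ₁) * (τ₁⁻¹ * τ) := by
    rw [mul_add y s₁, add_mul, mul_assoc y (b * τ₁), mul_assoc b, mul_inv_cancel_left₀ hτ₁0]
    noncomm_ring
  rw [this]
  exact add_mem (Lsub_le_succ n ht) (mem_Sset_iff.1 huS _ hyw)

lemma rightTranslatesOnto_and_ssetTransitive (hG : ∀ x ∈ G, x⁻¹ ∈ G) (hf0 : f 0 = 1)
    (hf1 : ∀ x : F, ∃ a ∈ G, ∃ b ∈ G, x = a + f 1 * b) (hli : LinearIndependent G f)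
    (hb : ∀ k : ℕ, 1 ≤ k → ∃ b : F, ∀ x ∈ Dset G f k,
      ∃ s ∈ Sset G f k, ∃ t ∈ Sset G f k, x = s + b * t) (k : ℕ) :
    RightTranslatesOnto G f k ∧ SsetTransitive G f k := by
  induction k with
  | zero => exact ⟨rightTranslatesOnto_zero hf0, ssetTransitive_zero hG hf0 hf1⟩
  | succ n ih =>
    exact ⟨rightTranslatesOnto_succ hG hli ih.1 ih.2,
      ssetTransitive_succ hG hli ih.1 ih.2 (hb (n + 1) n.succ_pos)⟩

end Model

/-- In a model of the theory `T`, every left `G`-subspace `H` of `F` of dimension `k + 1`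
(i.e. the span of a left `G`-independent family of `k + 1` elements) has the form
`L_k · a` for some `a ∈ F`. -/
theorem stmt11 {F : Type*} [DivisionRing F]
    (G : Subring F) (hG : ∀ x ∈ G, x⁻¹ ∈ G)
    (f : ℕ → F) (hf0 : f 0 = 1)
    (T4 : ∀ x : F, ∃ a ∈ G, ∃ b ∈ G, x = a + f 1 * b)
    (T5 : ∀ c : ℕ → F, (∀ i, c i ∈ G) →
      ∀ m : ℕ, ∑ i ∈ Finset.range m, c i * f i = 0 → ∀ i < m, c i = 0)
    (T6 : ∀ k : ℕ, 1 ≤ k → ∃ b ∈ Dset G f k,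
      ∀ x ∈ Dset G f k, ∃ s ∈ Sset G f k, ∃ t ∈ Sset G f k, x = s + b * t) :
    ∀ (k : ℕ) (H : Set F),
      (∃ h : Fin (k + 1) → F,
        (∀ c : Fin (k + 1) → F, (∀ i, c i ∈ G) → ∑ i, c i * h i = 0 → ∀ i, c i = 0) ∧
        H = GSpan G h) →
      ∃ a : F, (fun x => x * a) '' Lset G f k = H := by
  rintro k _ ⟨h, hh, rfl⟩
  have hli : LinearIndependent G h := Fintype.linearIndependent_iff.2 fun c hc i =>
    Subtype.ext (hh (fun i => c i) (fun i => (c i).2) (by simpa [Subring.smul_def] using hc) i)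
  obtain ⟨a, -, ha⟩ := (rightTranslatesOnto_and_ssetTransitive hG hf0 T4
    (linearIndependent_of_sum_range_eq_zero T5) (fun k hk => (T6 k hk).imp fun _ hb => hb.2)
    k).1 h hli
  refine ⟨a, ?_⟩
  rw [GSpan_eq_span, ← ha, ← coe_Lsub, map_coe]
  rfl
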